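/- Let k ∈ ℕ₀, r ∈ ℕ, s > 0, and let T ∈ E'(ℝ^d), (f_ε)_{ε∈(0,1)} smooth functions, all supported in a fixed compact set K, such that: (i) for every s' > s there is C with sup_ξ (1+|ξ|)^k |\hat{f_ε}(ξ)| ≤ C ε^{−s'} for all ε ∈ (0,1); (ii) for every a > 0 there is C_a with |⟨T − f_ε, ρ⟩| ≤ C_a ε^a ‖ρ‖_{C^r} for all ρ ∈ C^r and ε ∈ (0,1). Then for every η ∈ (0,1) there exists C_η > 0 such that |\hat{T}(ξ)| ≤ C_η (1+|ξ|²)^{−k/2+η} for all ξ ∈ ℝ^d. -/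

import Mathlib

open MeasureTheory Filter Topology
open scoped ENNReal

/-- The exponential test function `x ↦ e^{−i ξ·x}`. -/
noncomputable def stmt6exp {d : ℕ} (ξ : EuclideanSpace ℝ (Fin d)) :
    EuclideanSpace ℝ (Fin d) → ℂ :=
  fun x => Complex.exp (-(Complex.I * ((inner ℝ ξ x : ℝ) : ℂ)))

/-- Fourier transform (as an integral) of a function. -/
noncomputable def stmt6Fhat {d : ℕ} (f : EuclideanSpace ℝ (Fin d) → ℂ)
    (ξ : EuclideanSpace ℝ (Fin d)) : ℂ :=
  ∫ x, stmt6exp ξ x * f x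

lemma aux_exp_iteratedFDeriv {E : Type*} [NormedAddCommGroup E] [NormedSpace ℝ E]
    (L : E →L[ℝ] ℂ) (n : ℕ) :
    iteratedFDeriv ℝ n (fun x => Complex.exp (L x)) = fun x =>
      Complex.exp (L x) •
        (ContinuousMultilinearMap.mkPiAlgebra ℝ (Fin n) ℂ).compContinuousLinearMap
          (fun _ => L) := by
  induction n with
  | zero =>
    funext x
    ext m
    simp [iteratedFDeriv_zero_apply]
  | succ n IH =>
    funext x
    ext m
    have hd : HasFDerivAt (fun y => Complex.exp (L y)) (Complex.exp (L x) • L) x := by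
      have h1 : HasFDerivAt Complex.exp
          (((1 : ℂ →L[ℂ] ℂ).smulRight (Complex.exp (L x))).restrictScalars ℝ) (L x) :=
        ((Complex.hasDerivAt_exp (L x)).hasFDerivAt).restrictScalars ℝ
      have h2 := h1.comp x L.hasFDerivAt
      refine HasFDerivAt.congr_fderiv h2 ?_
      ext v
      simp [mul_comm]
    have hsm := hd.smul_const
      ((ContinuousMultilinearMap.mkPiAlgebra ℝ (Fin n) ℂ).compContinuousLinearMap
        (fun _ => L))
    rw [iteratedFDeriv_succ_apply_left, IH, hsm.fderiv]
    simp [Fin.prod_univ_succ, smul_eq_mul, Fin.tail]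
    ring

lemma aux_exp_iteratedFDeriv_norm {E : Type*} [NormedAddCommGroup E] [NormedSpace ℝ E]
    (L : E →L[ℝ] ℂ) (h1 : ∀ x, ‖Complex.exp (L x)‖ = 1) (n : ℕ) (x : E) :
    ‖iteratedFDeriv ℝ n (fun x => Complex.exp (L x)) x‖ ≤ ‖L‖ ^ n := by
  rw [aux_exp_iteratedFDeriv]
  beta_reduce
  refine le_trans (ContinuousMultilinearMap.opNorm_smul_le _ _) ?_
  rw [h1, one_mul]
  calc ‖(ContinuousMultilinearMap.mkPiAlgebra ℝ (Fin n) ℂ).compContinuousLinearMap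
          (fun _ => L)‖
      ≤ ‖ContinuousMultilinearMap.mkPiAlgebra ℝ (Fin n) ℂ‖ * ∏ _i : Fin n, ‖L‖ :=
        ContinuousMultilinearMap.norm_compContinuousLinearMap_le _ _
    _ ≤ ‖L‖ ^ n := by
        rw [ContinuousMultilinearMap.norm_mkPiAlgebra, one_mul, Finset.prod_const]
        simp


lemma aux_sq1 (t : ℝ) : (1 + t) ^ 2 ≤ 2 * (1 + t ^ 2) := by nlinarith [sq_nonneg (t - 1)]

lemma aux_sq2 (t : ℝ) (ht : 0 ≤ t) : 1 + t ^ 2 ≤ (1 + t) ^ 2 := by nlinarith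

set_option maxHeartbeats 1000000 in
theorem stmt6 (d : ℕ) (k : ℕ) (r : ℕ) (s : ℝ) (hs : 0 < s)
    (T : (EuclideanSpace ℝ (Fin d) → ℂ) →ₗ[ℂ] ℂ)
    (K : Set (EuclideanSpace ℝ (Fin d))) (hK : IsCompact K)
    (hTsupp : ∀ ρ : EuclideanSpace ℝ (Fin d) → ℂ, (∀ x ∈ K, ρ x = 0) → T ρ = 0)
    (f : ℝ → EuclideanSpace ℝ (Fin d) → ℂ)
    (hfsm : ∀ ε ∈ Set.Ioo (0:ℝ) 1, ContDiff ℝ (⊤ : ℕ∞) (f ε))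
    (hfsupp : ∀ ε ∈ Set.Ioo (0:ℝ) 1, tsupport (f ε) ⊆ K)
    -- (i) for every s' > s, sup_ξ (1+|ξ|)^k |f̂_ε(ξ)| ≤ C ε^{−s'}
    (hi : ∀ s' > s, ∃ C > (0:ℝ), ∀ ε ∈ Set.Ioo (0:ℝ) 1, ∀ ξ,
      (1 + ‖ξ‖) ^ (k : ℝ) * ‖stmt6Fhat (f ε) ξ‖ ≤ C * ε ^ (-s'))
    -- (ii) strong association of any order against C^r test functions
    (hii : ∀ a > (0:ℝ), ∃ Ca > (0:ℝ), ∀ ρ : EuclideanSpace ℝ (Fin d) → ℂ,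
      ContDiff ℝ (r : ℕ∞) ρ → ∀ Cρ : ℝ,
        (∀ x, ∀ i ≤ r, ‖iteratedFDeriv ℝ i ρ x‖ ≤ Cρ) →
        ∀ ε ∈ Set.Ioo (0:ℝ) 1, ‖T ρ - ∫ x, f ε x * ρ x‖ ≤ Ca * ε ^ a * Cρ) :
    -- then for every η ∈ (0,1), |T̂(ξ)| ≤ C_η (1+|ξ|²)^{−k/2+η}
    ∀ η ∈ Set.Ioo (0:ℝ) 1, ∃ Cη > (0:ℝ), ∀ ξ,
      ‖T (stmt6exp ξ)‖ ≤ Cη * (1 + ‖ξ‖ ^ 2) ^ (-(k : ℝ) / 2 + η) := by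
  intro η hη
  obtain ⟨hη0, hη1⟩ := hη
  obtain ⟨C, hC0, hCb⟩ := hi (s + 1) (by linarith)
  set b : ℝ := 2 * η / (s + 1) with hb
  have hb0 : 0 < b := by positivity
  set a : ℝ := ((k : ℝ) + r) * (s + 1) / (2 * η) + 1 with ha
  have ha0 : 0 < a := by positivity
  obtain ⟨Ca, hCa0, hCab⟩ := hii a ha0
  have hba : b * a = ((k : ℝ) + r) + 2 * η / (s + 1) := by
    have h1 : s + 1 ≠ 0 := by positivity
    have h2 : η ≠ 0 := ne_of_gt hη0
    rw [hb, ha]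
    field_simp
  refine ⟨2 * (Ca + C * 2 ^ (s + 1)), by positivity, ?_⟩
  intro ξ
  set A : ℝ := 1 + ‖ξ‖ with hA
  have hA1 : (1 : ℝ) ≤ A := le_add_of_nonneg_right (norm_nonneg ξ)
  have hA0 : (0 : ℝ) < A := lt_of_lt_of_le one_pos hA1
  set ε : ℝ := (1/2) * A ^ (-b) with hε
  have hεI : ε ∈ Set.Ioo (0:ℝ) 1 := by
    constructor
    · positivity
    · have : A ^ (-b) ≤ 1 :=
        Real.rpow_le_one_of_one_le_of_nonpos hA1 (by linarith)
      rw [hε]; nlinarith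
  -- the linear functional L
  set L : EuclideanSpace ℝ (Fin d) →L[ℝ] ℂ :=
    (-Complex.I) • ((Complex.ofRealCLM : ℝ →L[ℝ] ℂ).comp
      (innerSL ℝ ξ)) with hL
  have hLapp : ∀ x, L x = -(Complex.I * ((inner ℝ ξ x : ℝ) : ℂ)) := by
    intro x
    simp [hL, neg_mul]
  have hρL : stmt6exp ξ = fun x => Complex.exp (L x) := by
    funext x
    rw [hLapp]
    rfl
  have hnorm1 : ∀ x, ‖Complex.exp (L x)‖ = 1 := by
    intro x
    rw [hLapp]
    rw [Complex.norm_exp]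
    simp
  have hLle : ‖L‖ ≤ ‖ξ‖ := by
    refine ContinuousLinearMap.opNorm_le_bound _ (norm_nonneg ξ) fun x => ?_
    rw [hLapp]
    rw [norm_neg, norm_mul, Complex.norm_I, one_mul, Complex.norm_real]
    exact abs_real_inner_le_norm ξ x
  have hsm : ContDiff ℝ (r : ℕ∞) (stmt6exp ξ) := by
    rw [hρL]
    exact Complex.contDiff_exp.comp L.contDiff
  have hder : ∀ x, ∀ i ≤ r, ‖iteratedFDeriv ℝ i (stmt6exp ξ) x‖ ≤ A ^ (r : ℝ) := by
    intro x i hir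
    rw [hρL]
    refine le_trans (aux_exp_iteratedFDeriv_norm L hnorm1 i x) ?_
    calc ‖L‖ ^ i ≤ A ^ i := by
          refine pow_le_pow_left₀ (norm_nonneg L) ?_ i
          rw [hA]; linarith [norm_nonneg ξ]
      _ = A ^ (i : ℝ) := (Real.rpow_natCast A i).symm
      _ ≤ A ^ (r : ℝ) := Real.rpow_le_rpow_of_exponent_le hA1 (by exact_mod_cast hir)
  have h1 := hCab (stmt6exp ξ) hsm (A ^ (r : ℝ)) hder ε hεI
  have h2 := hCb ε hεI ξ
  have hFhat : (∫ x, f ε x * stmt6exp ξ x) = stmt6Fhat (f ε) ξ := by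
    rw [stmt6Fhat]
    congr 1
    funext x
    ring
  rw [hFhat] at h1
  have htri : ‖T (stmt6exp ξ)‖ ≤ Ca * ε ^ a * A ^ (r : ℝ) + ‖stmt6Fhat (f ε) ξ‖ := by
    have h3 := norm_add_le (T (stmt6exp ξ) - stmt6Fhat (f ε) ξ) (stmt6Fhat (f ε) ξ)
    rw [sub_add_cancel] at h3
    exact h3.trans (add_le_add h1 le_rfl)
  have hrpos : ∀ t : ℝ, 0 ≤ A ^ t := fun t => (Real.rpow_pos_of_pos hA0 t).le
  have hεa : ε ^ a ≤ A ^ (-(b * a)) := by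
    have h4 : ε ^ a = (1/2 : ℝ) ^ a * A ^ (-b * a) := by
      rw [hε, Real.mul_rpow (by norm_num) (hrpos _), ← Real.rpow_mul hA0.le]
    have h5 : (1/2 : ℝ) ^ a ≤ 1 := Real.rpow_le_one (by norm_num) (by norm_num) ha0.le
    rw [h4]
    have := mul_le_mul_of_nonneg_right h5 (hrpos (-b * a))
    rw [one_mul] at this
    exact this.trans_eq (by ring_nf)
  have hterm1 : Ca * ε ^ a * A ^ (r : ℝ) ≤ Ca * A ^ (2 * η - k) := by
    have h6 : ε ^ a * A ^ (r : ℝ) ≤ A ^ (-(b * a)) * A ^ (r : ℝ) :=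
      mul_le_mul_of_nonneg_right hεa (hrpos _)
    have h7 : A ^ (-(b * a)) * A ^ (r : ℝ) = A ^ ((r : ℝ) - b * a) := by
      rw [← Real.rpow_add hA0]; ring_nf
    have h8 : A ^ ((r : ℝ) - b * a) ≤ A ^ (2 * η - k) := by
      refine Real.rpow_le_rpow_of_exponent_le hA1 ?_
      have h9 : 0 ≤ 2 * η / (s + 1) := by positivity
      rw [hba] at *
      linarith [hba]
    calc Ca * ε ^ a * A ^ (r : ℝ) = Ca * (ε ^ a * A ^ (r : ℝ)) := by ring
      _ ≤ Ca * (A ^ (-(b * a)) * A ^ (r : ℝ)) :=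
          mul_le_mul_of_nonneg_left h6 hCa0.le
      _ = Ca * A ^ ((r : ℝ) - b * a) := by rw [h7]
      _ ≤ Ca * A ^ (2 * η - k) := mul_le_mul_of_nonneg_left h8 hCa0.le
  have hterm2 : ‖stmt6Fhat (f ε) ξ‖ ≤ C * 2 ^ (s + 1) * A ^ (2 * η - k) := by
    have hAk : (0 : ℝ) < A ^ (k : ℝ) := Real.rpow_pos_of_pos hA0 _
    have hF : ‖stmt6Fhat (f ε) ξ‖ ≤ C * ε ^ (-(s + 1)) * A ^ (-(k : ℝ)) := by
      have h10 : ‖stmt6Fhat (f ε) ξ‖ * A ^ (k : ℝ) ≤ C * ε ^ (-(s + 1)) := by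
        rw [mul_comm]; exact h2
      have h11 := (le_div_iff₀ hAk).mpr h10
      rw [div_eq_mul_inv, ← Real.rpow_neg hA0.le] at h11
      exact h11
    have hεs : ε ^ (-(s + 1)) = 2 ^ (s + 1) * A ^ (b * (s + 1)) := by
      rw [hε, Real.mul_rpow (by norm_num) (hrpos _), ← Real.rpow_mul hA0.le]
      congr 1
      · rw [one_div, Real.inv_rpow (by norm_num), Real.rpow_neg (by norm_num), inv_inv]
      · ring_nf
    have hbs : b * (s + 1) = 2 * η := by
      rw [hb]
      field_simp
    rw [hεs, hbs] at hF
    calc ‖stmt6Fhat (f ε) ξ‖ ≤ C * (2 ^ (s + 1) * A ^ (2 * η)) * A ^ (-(k : ℝ)) := hF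
      _ = C * 2 ^ (s + 1) * (A ^ (2 * η) * A ^ (-(k : ℝ))) := by ring
      _ = C * 2 ^ (s + 1) * A ^ (2 * η - k) := by
          rw [← Real.rpow_add hA0]; ring_nf
  set B : ℝ := 1 + ‖ξ‖ ^ 2 with hB
  have hB0 : (0 : ℝ) < B := by positivity
  have hBrpos : ∀ t : ℝ, 0 ≤ B ^ t := fun t => (Real.rpow_pos_of_pos hB0 t).le
  have hA2B : A ^ 2 ≤ 2 * B := by
    rw [hA, hB]; exact aux_sq1 ‖ξ‖
  have hBA2 : B ≤ A ^ 2 := by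
    rw [hA, hB]; exact aux_sq2 ‖ξ‖ (norm_nonneg ξ)
  have hAB : A ^ (2 * η - k) ≤ 2 * B ^ (-(k : ℝ) / 2 + η) := by
    have e1 : A ^ (2 * η) ≤ 2 * B ^ η := by
      have e1a : A ^ (2 * η) = ((A ^ 2 : ℝ)) ^ η := by
        rw [← Real.rpow_natCast A 2, ← Real.rpow_mul hA0.le]
        norm_num
      have e1b : ((A ^ 2 : ℝ)) ^ η ≤ (2 * B) ^ η :=
        Real.rpow_le_rpow (by positivity) hA2B hη0.le
      have e1c : (2 * B) ^ η = (2 : ℝ) ^ η * B ^ η :=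
        Real.mul_rpow (by norm_num) hB0.le
      have e1d : (2 : ℝ) ^ η ≤ 2 := by
        have := Real.rpow_le_rpow_of_exponent_le (by norm_num : (1:ℝ) ≤ 2) hη1.le
        rwa [Real.rpow_one] at this
      calc A ^ (2 * η) = ((A ^ 2 : ℝ)) ^ η := e1a
        _ ≤ (2 : ℝ) ^ η * B ^ η := by rw [← e1c]; exact e1b
        _ ≤ 2 * B ^ η := mul_le_mul_of_nonneg_right e1d (hBrpos η)
    have e2 : A ^ (-(k : ℝ)) ≤ B ^ (-(k : ℝ) / 2) := by
      have e2a : ((A ^ 2 : ℝ)) ^ (-(k : ℝ) / 2) = A ^ (-(k : ℝ)) := by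
        rw [← Real.rpow_natCast A 2, ← Real.rpow_mul hA0.le]
        norm_num
        ring_nf
        rw [Real.rpow_neg hA0.le, Real.rpow_natCast, inv_pow]
      rw [← e2a]
      refine Real.rpow_le_rpow_of_nonpos hB0 hBA2 ?_
      have : (0 : ℝ) ≤ (k : ℝ) := Nat.cast_nonneg k
      linarith
    calc A ^ (2 * η - k) = A ^ (2 * η) * A ^ (-(k : ℝ)) := by
          rw [← Real.rpow_add hA0]; ring_nf
      _ ≤ (2 * B ^ η) * B ^ (-(k : ℝ) / 2) :=
          mul_le_mul e1 e2 (hrpos _) (by positivity)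
      _ = 2 * B ^ (-(k : ℝ) / 2 + η) := by
          rw [Real.rpow_add hB0]; ring
  calc ‖T (stmt6exp ξ)‖ ≤ Ca * ε ^ a * A ^ (r : ℝ) + ‖stmt6Fhat (f ε) ξ‖ := htri
    _ ≤ Ca * A ^ (2 * η - k) + C * 2 ^ (s + 1) * A ^ (2 * η - k) :=
        add_le_add hterm1 hterm2
    _ = (Ca + C * 2 ^ (s + 1)) * A ^ (2 * η - k) := by ring
    _ ≤ (Ca + C * 2 ^ (s + 1)) * (2 * B ^ (-(k : ℝ) / 2 + η)) :=
        mul_le_mul_of_nonneg_left hAB (by positivity)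
    _ = 2 * (Ca + C * 2 ^ (s + 1)) * B ^ (-(k : ℝ) / 2 + η) := by ring
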